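/- arXiv:0803.2205 — 7 statements merged into one kernel-verified Lean document; each statement's English description precedes it below -/
import Mathlib

section
/- Let L be a right Bol loop such that for all x, y ∈ L, either xy = yx or x⁻¹(xy) = y. Then L satisfies the left inverse property x⁻¹(xy) = y for all x, y, and hence L is a Moufang loop. -/
/-!
If `x` and `y` do not commute, the hypothesis gives `x⁻¹(xy) = y` outright. If they commute,
apply the hypothesis to `x⁻¹` and `yx`: either these commute, and then
`x⁻¹(xy) = x⁻¹(yx) = (yx)x⁻¹ = y` by the right inverse property, or `x(x⁻¹(yx)) = yx = xy`
and `x` cancels on the left. With the left inverse property, the Bol identity at `x = y⁻¹`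
gives flexibility `(yz)y = y(zy)`, which turns the Bol identity into the Moufang identity.
-/

section RightBol

variable {L : Type*} [Mul L]

theorem mul_right_cancel_of_existsUnique (hrd : ∀ a b : L, ∃! y : L, y * a = b) {a b c : L}
    (h : b * a = c * a) : b = c :=
  (hrd a (c * a)).unique h rfl

theorem mul_left_cancel_of_existsUnique (hld : ∀ a b : L, ∃! x : L, a * x = b) {a b c : L}
    (h : a * b = a * c) : b = c :=
  (hld a (a * c)).unique h rfl

variable [Inv L]

theorem inv_mul_cancel_left_of_commute_or (hld : ∀ a b : L, ∃! x : L, a * x = b)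
    (hinv_inv : ∀ a : L, a⁻¹⁻¹ = a) (hrip : ∀ a b : L, a * b * b⁻¹ = a)
    (hyp : ∀ x y : L, x * y = y * x ∨ x⁻¹ * (x * y) = y) (x y : L) :
    x⁻¹ * (x * y) = y := by
  obtain hcomm | hlip := hyp x y
  · rw [hcomm]
    obtain hcomm' | hlip' := hyp x⁻¹ (y * x)
    · rw [hcomm', hrip]
    · rw [hinv_inv] at hlip'
      exact mul_left_cancel_of_existsUnique hld (by rw [hlip', hcomm])
  · exact hlip

variable [One L]

theorem inv_inv_of_mul_inv_cancel (hrd : ∀ a b : L, ∃! y : L, y * a = b)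
    (hinvr : ∀ a : L, a * a⁻¹ = 1) (hinvl : ∀ a : L, a⁻¹ * a = 1) (a : L) : a⁻¹⁻¹ = a :=
  mul_right_cancel_of_existsUnique hrd (a := a⁻¹) <| by rw [hinvl, hinvr]

theorem mul_inv_cancel_right_of_bol (h1 : ∀ a : L, 1 * a = a)
    (hrd : ∀ a b : L, ∃! y : L, y * a = b) (hinvr : ∀ a : L, a * a⁻¹ = 1)
    (bol : ∀ x y z : L, ((x * y) * z) * y = x * ((y * z) * y)) (a b : L) :
    a * b * b⁻¹ = a :=
  mul_right_cancel_of_existsUnique hrd <| by simpa only [hinvr, h1] using bol a b b⁻¹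

theorem mul_mul_self_eq_of_bol (h1 : ∀ a : L, 1 * a = a) (hinvl : ∀ a : L, a⁻¹ * a = 1)
    (hinv_inv : ∀ a : L, a⁻¹⁻¹ = a) (hlip : ∀ x y : L, x⁻¹ * (x * y) = y)
    (bol : ∀ x y z : L, ((x * y) * z) * y = x * ((y * z) * y)) (y z : L) :
    y * z * y = y * (z * y) := by
  have hbol : z * y = y⁻¹ * (y * z * y) := by simpa only [hinvl, h1] using bol y⁻¹ y z
  have hcancel : y * (y⁻¹ * (y * z * y)) = y * z * y := by
    simpa only [hinv_inv] using hlip y⁻¹ (y * z * y)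
  rw [hbol, hcancel]

end RightBol

theorem stmt_5_general {L : Type*} [Mul L] [One L] [Inv L]
    (h1 : ∀ a : L, 1 * a = a)
    (hld : ∀ a b : L, ∃! x : L, a * x = b) (hrd : ∀ a b : L, ∃! y : L, y * a = b)
    (hinvr : ∀ a : L, a * a⁻¹ = 1) (hinvl : ∀ a : L, a⁻¹ * a = 1)
    (bol : ∀ x y z : L, ((x * y) * z) * y = x * ((y * z) * y))
    (hyp : ∀ x y : L, x * y = y * x ∨ x⁻¹ * (x * y) = y) :
    (∀ x y : L, x⁻¹ * (x * y) = y) ∧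
      (∀ x y z : L, ((x * y) * z) * y = x * (y * (z * y))) := by
  have hinv_inv := inv_inv_of_mul_inv_cancel hrd hinvr hinvl
  have hrip := mul_inv_cancel_right_of_bol h1 hrd hinvr bol
  have hlip := inv_mul_cancel_left_of_commute_or hld hinv_inv hrip hyp
  have hflex := mul_mul_self_eq_of_bol h1 hinvl hinv_inv hlip bol
  exact ⟨hlip, fun x y z => by rw [bol, hflex]⟩

/-- A right Bol loop in which every pair of elements commutes or satisfies the
left inverse property is a left inverse property loop, hence Moufang. -/
theorem stmt_5 {L : Type*} [Mul L] [One L] [Inv L]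
    (h1 : ∀ a : L, 1 * a = a) (h2 : ∀ a : L, a * 1 = a)
    (hld : ∀ a b : L, ∃! x : L, a * x = b) (hrd : ∀ a b : L, ∃! y : L, y * a = b)
    (hinvr : ∀ a : L, a * a⁻¹ = 1) (hinvl : ∀ a : L, a⁻¹ * a = 1)
    (bol : ∀ x y z : L, ((x * y) * z) * y = x * ((y * z) * y))
    (hyp : ∀ x y : L, x * y = y * x ∨ x⁻¹ * (x * y) = y) :
    (∀ x y : L, x⁻¹ * (x * y) = y) ∧
      (∀ x y z : L, ((x * y) * z) * y = x * (y * (z * y))) :=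
  stmt_5_general h1 hld hrd hinvr hinvl bol hyp
end

section
/- Let L be a right Bol loop such that for all x, y, z ∈ L, either D'(x,y,z) or E'(x,y,z) holds, where D'(x,y,z) means (xy)z = x(yz) and (xz)y = x(zy), and E'(x,y,z) means (xy)z = x(zy) and (xz)y = x(yz). Then for all x, y ∈ L, either x⁻¹(xy) = y or xy = yx; consequently L is a Moufang loop. -/
/-!
Unique right division makes `y ↦ y * a` injective, so the Bol identity at `(a, b, b⁻¹)` and
`(a, b⁻¹, b)` gives the right inverse property. Applying the D'/E' dichotomy to the triple
`(x⁻¹, x, y)`, case D' is the left inverse property outright; in case E' one gets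
`y = x⁻¹ (y x)`, hence `x (y x⁻¹) = y` by the Bol identity, hence `x⁻¹ y = y x⁻¹` from the
triple `(x⁻¹, x, y x⁻¹)`, and finally `x⁻¹ (x y) = (x⁻¹ y) x = (y x⁻¹) x = y`. So the left
inverse property holds for every pair. With it the triple `(y, z, y)` yields flexibility
`(y z) y = y (z y)`, which turns the right Bol identity into the Moufang identity.
-/

theorem mul_right_injective_of_existsUnique {L : Type*} [Mul L]
    (hrd : ∀ a b : L, ∃! y : L, y * a = b) (a : L) :
    Function.Injective fun y : L => y * a := by
  intro u v h
  obtain ⟨w, -, huniq⟩ := hrd a (v * a)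
  exact (huniq u h).trans (huniq v rfl).symm

section RightBol

variable {L : Type*} [Mul L] [One L] [Inv L]

theorem Bol.mul_inv_cancel_right (hrd : ∀ a b : L, ∃! y : L, y * a = b)
    (h1 : ∀ a : L, 1 * a = a) (hinvr : ∀ a : L, a * a⁻¹ = 1)
    (bol : ∀ x y z : L, ((x * y) * z) * y = x * ((y * z) * y)) (a b : L) :
    a * b * b⁻¹ = a := by
  apply mul_right_injective_of_existsUnique hrd b
  simpa only [hinvr, h1] using bol a b b⁻¹

theorem Bol.inv_mul_cancel_right (hrd : ∀ a b : L, ∃! y : L, y * a = b)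
    (h1 : ∀ a : L, 1 * a = a) (hinvl : ∀ a : L, a⁻¹ * a = 1)
    (bol : ∀ x y z : L, ((x * y) * z) * y = x * ((y * z) * y)) (a b : L) :
    a * b⁻¹ * b = a := by
  apply mul_right_injective_of_existsUnique hrd b⁻¹
  simpa only [hinvl, h1] using bol a b⁻¹ b

theorem Bol.inv_mul_cancel_left_of_DE (h1 : ∀ a : L, 1 * a = a)
    (hinvr : ∀ a : L, a * a⁻¹ = 1) (hinvl : ∀ a : L, a⁻¹ * a = 1)
    (bol : ∀ x y z : L, ((x * y) * z) * y = x * ((y * z) * y))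
    (mul_inv_cancel_right : ∀ a b : L, a * b * b⁻¹ = a)
    (inv_mul_cancel_right : ∀ a b : L, a * b⁻¹ * b = a)
    (hDE : ∀ x y z : L,
      ((x * y) * z = x * (y * z) ∧ (x * z) * y = x * (z * y)) ∨
      ((x * y) * z = x * (z * y) ∧ (x * z) * y = x * (y * z)))
    (x y : L) : x⁻¹ * (x * y) = y := by
  rcases hDE x⁻¹ x y with ⟨hD, -⟩ | ⟨hE₁, hE₂⟩
  · rw [← hD, hinvl, h1]
  rw [hinvl, h1] at hE₁
  have hconj : x * (y * x⁻¹) = y := by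
    have hb := bol x x⁻¹ (y * x)
    rw [hinvr, h1, mul_inv_cancel_right, ← hE₁] at hb
    exact hb.symm
  have hcomm : x⁻¹ * y = y * x⁻¹ := by
    rcases hDE x⁻¹ x (y * x⁻¹) with ⟨hD, -⟩ | ⟨hE, -⟩
    · rw [hinvl, h1] at hD
      rw [hD, hconj]
    · rw [hinvl, h1] at hE
      rw [hE, inv_mul_cancel_right]
  rw [← hE₂, hcomm, inv_mul_cancel_right]

theorem Bol.flexible_of_DE (h1 : ∀ a : L, 1 * a = a) (hinvl : ∀ a : L, a⁻¹ * a = 1)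
    (bol : ∀ x y z : L, ((x * y) * z) * y = x * ((y * z) * y))
    (inv_mul_cancel_left : ∀ a b : L, a⁻¹ * (a * b) = b)
    (hDE : ∀ x y z : L,
      ((x * y) * z = x * (y * z) ∧ (x * z) * y = x * (z * y)) ∨
      ((x * y) * z = x * (z * y) ∧ (x * z) * y = x * (y * z)))
    (y z : L) : y * z * y = y * (z * y) := by
  rcases hDE y z y with ⟨hD, -⟩ | ⟨hE, -⟩
  · exact hD
  have hcomm : z * y = y * z := by
    have hb := bol y⁻¹ y z
    rw [hinvl, h1] at hb
    rw [hb, hE, inv_mul_cancel_left]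
  rw [hE, hcomm]

end RightBol

theorem stmt_7_general {L : Type*} [Mul L] [One L] [Inv L]
    (h1 : ∀ a : L, 1 * a = a)
    (hrd : ∀ a b : L, ∃! y : L, y * a = b)
    (hinvr : ∀ a : L, a * a⁻¹ = 1) (hinvl : ∀ a : L, a⁻¹ * a = 1)
    (bol : ∀ x y z : L, ((x * y) * z) * y = x * ((y * z) * y))
    (hDE : ∀ x y z : L,
      ((x * y) * z = x * (y * z) ∧ (x * z) * y = x * (z * y)) ∨
      ((x * y) * z = x * (z * y) ∧ (x * z) * y = x * (y * z))) :
    (∀ x y : L, x⁻¹ * (x * y) = y ∨ x * y = y * x) ∧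
      (∀ x y z : L, ((x * y) * z) * y = x * (y * (z * y))) := by
  have lip := Bol.inv_mul_cancel_left_of_DE h1 hinvr hinvl bol
    (Bol.mul_inv_cancel_right hrd h1 hinvr bol) (Bol.inv_mul_cancel_right hrd h1 hinvl bol) hDE
  refine ⟨fun x y => Or.inl (lip x y), fun x y z => ?_⟩
  rw [bol, Bol.flexible_of_DE h1 hinvl bol lip hDE]

/-- If each triple of a right Bol loop satisfies D' or E', then every pair
satisfies the left inverse property or commutes, and the loop is Moufang. -/
theorem stmt_7 {L : Type*} [Mul L] [One L] [Inv L]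
    (h1 : ∀ a : L, 1 * a = a) (h2 : ∀ a : L, a * 1 = a)
    (hld : ∀ a b : L, ∃! x : L, a * x = b) (hrd : ∀ a b : L, ∃! y : L, y * a = b)
    (hinvr : ∀ a : L, a * a⁻¹ = 1) (hinvl : ∀ a : L, a⁻¹ * a = 1)
    (bol : ∀ x y z : L, ((x * y) * z) * y = x * ((y * z) * y))
    (hDE : ∀ x y z : L,
      ((x * y) * z = x * (y * z) ∧ (x * z) * y = x * (z * y)) ∨
      ((x * y) * z = x * (z * y) ∧ (x * z) * y = x * (y * z))) :
    (∀ x y : L, x⁻¹ * (x * y) = y ∨ x * y = y * x) ∧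
      (∀ x y z : L, ((x * y) * z) * y = x * (y * (z * y))) :=
  stmt_7_general h1 hrd hinvr hinvl bol hDE
end

section
/- Let L be a right Bol loop such that for all x, y, z ∈ L, either D'(x,y,z) or F'(x,y,z) holds, where D'(x,y,z) means (xy)z = x(yz) and (xz)y = x(zy), and F'(x,y,z) means (xy)z = (xz)y and x(yz) = x(zy). Then L is a group, i.e., multiplication in L is associative. -/
/-!
A right Bol loop in which every triple satisfies D' or F' is flexible (from the triples
`(a, b, a)` and `(a, a, ab)`), hence has the left inverse property and satisfies the left Bol
identity. If `u` and `v` do not commute, F'(a, u, v) fails, so D'(a, u, v) gives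
`(au)v = a(uv)` for every `a`; this settles `(xy)z = x(yz)` unless `y` commutes with `z`.
When it does, the Bol identities give `(yz)(((xy)z)y) = ((yz)(x(yz)))y`, which settles the
case that `y` does not commute with `x(yz)`. In the remaining case `x(yz) = (yx)z`, and the Bol
identity applied to `y`, `x⁻¹`, `x(yz)` shows that `y` commutes with `x⁻¹`, hence with `x`.
-/

section Magma

variable {L : Type*} [Mul L]

def DPrime (x y z : L) : Prop :=
  (x * y) * z = x * (y * z) ∧ (x * z) * y = x * (z * y)

def FPrime (x y z : L) : Prop :=
  (x * y) * z = (x * z) * y ∧ x * (y * z) = x * (z * y)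

def EveryTripleDOrF (L : Type*) [Mul L] : Prop :=
  ∀ x y z : L, DPrime x y z ∨ FPrime x y z

theorem mul_right_comm_of_dPrime_or_fPrime {a u v : L} (h : DPrime a u v ∨ FPrime a u v)
    (huv : Commute u v) : a * u * v = a * v * u := by
  rcases h with ⟨hD₁, hD₂⟩ | ⟨hF, -⟩
  · rw [hD₁, hD₂, huv.eq]
  · exact hF

end Magma

structure IsRightBolLoop (L : Type*) [Mul L] [One L] [Inv L] : Prop where
  one_mul : ∀ a : L, 1 * a = a
  existsUnique_mul_left : ∀ a b : L, ∃! x : L, a * x = b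
  existsUnique_mul_right : ∀ a b : L, ∃! y : L, y * a = b
  mul_inv : ∀ a : L, a * a⁻¹ = 1
  inv_mul : ∀ a : L, a⁻¹ * a = 1
  bol : ∀ x y z : L, ((x * y) * z) * y = x * ((y * z) * y)

namespace IsRightBolLoop

variable {L : Type*} [Mul L] [One L] [Inv L]

theorem mul_left_cancel (hL : IsRightBolLoop L) {a b c : L} (h : a * b = a * c) : b = c :=
  (hL.existsUnique_mul_left a (a * c)).unique h rfl

theorem mul_right_cancel (hL : IsRightBolLoop L) {a b c : L} (h : b * a = c * a) : b = c :=
  (hL.existsUnique_mul_right a (c * a)).unique h rfl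

theorem mul_inv_cancel_right (hL : IsRightBolLoop L) (a b : L) : a * b * b⁻¹ = a :=
  hL.mul_right_cancel (a := b) (by rw [hL.bol, hL.mul_inv, hL.one_mul])

theorem inv_inv (hL : IsRightBolLoop L) (a : L) : a⁻¹⁻¹ = a :=
  hL.mul_left_cancel (a := a⁻¹) (by rw [hL.mul_inv, hL.inv_mul])

theorem inv_mul_cancel_right (hL : IsRightBolLoop L) (a b : L) : a * b⁻¹ * b = a := by
  simpa only [hL.inv_inv] using hL.mul_inv_cancel_right a b⁻¹

theorem flexible (hL : IsRightBolLoop L) (hDF : EveryTripleDOrF L) (a b : L) :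
    a * b * a = a * (b * a) := by
  rcases hDF a b a with ⟨hD, -⟩ | ⟨hF₁, hF₂⟩
  · exact hD
  have hbol : a * a * b * a = a * (a * a * b) := by rw [hL.bol, hF₁]
  have hleft_alt : a * (a * b) = a * a * b := by
    rcases hDF a a (a * b) with ⟨-, hD⟩ | ⟨-, hF⟩
    · exact hL.mul_right_cancel (by rw [hD, hF₁, hbol])
    · exact hL.mul_left_cancel (by rw [hF, hF₁])
  rw [hF₁, ← hleft_alt, hF₂]

theorem mul_inv_cancel_left (hL : IsRightBolLoop L) (hflex : ∀ a b : L, a * b * a = a * (b * a))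
    (a w : L) : a * (a⁻¹ * w) = w := by
  have hconj : a * (a⁻¹ * w * a⁻¹) = w * a⁻¹ := by
    simpa only [hL.inv_inv, hL.mul_inv, hL.one_mul] using (hL.bol a⁻¹⁻¹ a⁻¹ w).symm
  calc a * (a⁻¹ * w) = a * (a⁻¹ * w * a⁻¹ * a) := by rw [hL.inv_mul_cancel_right]
    _ = a * (a⁻¹ * w * a⁻¹) * a := (hflex _ _).symm
    _ = w := by rw [hconj, hL.inv_mul_cancel_right]

theorem inv_mul_cancel_left (hL : IsRightBolLoop L) (hflex : ∀ a b : L, a * b * a = a * (b * a))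
    (a w : L) : a⁻¹ * (a * w) = w := by
  simpa only [hL.inv_inv] using hL.mul_inv_cancel_left hflex a⁻¹ w

theorem mul_inv_rev (hL : IsRightBolLoop L) (hflex : ∀ a b : L, a * b * a = a * (b * a))
    (a b : L) : (a * b)⁻¹ = b⁻¹ * a⁻¹ := by
  have h : b * (a * b)⁻¹ = a⁻¹ := by
    simpa only [hL.inv_mul_cancel_left hflex] using hL.mul_inv_cancel_right a⁻¹ (a * b)
  rw [← h, hL.inv_mul_cancel_left hflex]

theorem left_bol (hL : IsRightBolLoop L) (hflex : ∀ a b : L, a * b * a = a * (b * a))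
    (a b c : L) : a * (b * (a * c)) = a * (b * a) * c := by
  simpa only [hL.mul_inv_rev hflex, hL.inv_inv] using
    congrArg (·⁻¹) (hL.bol c⁻¹ a⁻¹ b⁻¹)

theorem mul_assoc_of_not_commute (hL : IsRightBolLoop L) {a u v : L}
    (h : DPrime a u v ∨ FPrime a u v) (huv : ¬Commute u v) : a * u * v = a * (u * v) := by
  rcases h with ⟨hD, -⟩ | ⟨-, hF⟩
  · exact hD
  · exact absurd (hL.mul_left_cancel hF) huv

theorem mul_assoc_of_not_commute_mul_mul (hL : IsRightBolLoop L) (hDF : EveryTripleDOrF L)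
    {x y z : L}
    (h : ¬Commute y (x * (y * z))) : x * y * z = x * (y * z) := by
  have key : y * z * (x * y * z * y) = y * z * (x * (y * z)) * y := by
    rw [hL.bol, hL.left_bol (hL.flexible hDF)]
  rw [hL.mul_assoc_of_not_commute (hDF _ _ _) (mt Commute.symm h)] at key
  exact hL.mul_right_cancel (hL.mul_left_cancel key)

theorem mul_mul_eq_of_commute (hL : IsRightBolLoop L) (hDF : EveryTripleDOrF L)
    {x y z : L} (hyz : Commute y z)
    (hyq : Commute y (x * (y * z))) : x * (y * z) = y * x * z :=
  hL.mul_right_cancel <| calc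
    x * (y * z) * y = y * (x * (y * z)) := hyq.eq.symm
    _ = y * (x * y) * z := hL.left_bol (hL.flexible hDF) _ _ _
    _ = y * x * y * z := by rw [hL.flexible hDF]
    _ = y * x * z * y := mul_right_comm_of_dPrime_or_fPrime (hDF _ _ _) hyz

theorem commute_inv_of_commute (hL : IsRightBolLoop L) (hDF : EveryTripleDOrF L)
    {x y z : L} (hyz : Commute y z)
    (hyq : Commute y (x * (y * z))) : Commute y x⁻¹ := by
  have hflex := hL.flexible hDF
  by_contra h
  have h₁ : y * x⁻¹ * (x * (y * z)) = y * (z * y) := hL.mul_right_cancel <| calc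
    y * x⁻¹ * (x * (y * z)) * x⁻¹ = y * (x⁻¹ * (x * (y * z)) * x⁻¹) := hL.bol _ _ _
    _ = y * (z * y * x⁻¹) := by rw [hL.inv_mul_cancel_left hflex, hyz.eq]
    _ = y * (z * (y * x⁻¹)) := by rw [hL.mul_assoc_of_not_commute (hDF _ _ _) h]
    _ = y * (z * y) * x⁻¹ := hL.left_bol hflex _ _ _
  have h₂ : x⁻¹ * y * (x * (y * z)) = y * (z * y) := by
    rw [mul_right_comm_of_dPrime_or_fPrime (hDF _ _ _) hyq, hL.inv_mul_cancel_left hflex, hflex]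
  exact h (hL.mul_right_cancel (h₁.trans h₂.symm))

theorem commute_of_commute_inv (hL : IsRightBolLoop L) (hDF : EveryTripleDOrF L)
    {x y : L} (h : Commute y x⁻¹) :
    Commute x y := calc
  x * y = x * y * x⁻¹ * x := (hL.inv_mul_cancel_right _ _).symm
  _ = y * x := by
    rw [mul_right_comm_of_dPrime_or_fPrime (hDF _ _ _) h, hL.mul_inv, hL.one_mul]

end IsRightBolLoop

theorem stmt_9_general {L : Type*} [Mul L] [One L] [Inv L]
    (h1 : ∀ a : L, 1 * a = a)
    (hld : ∀ a b : L, ∃! x : L, a * x = b) (hrd : ∀ a b : L, ∃! y : L, y * a = b)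
    (hinvr : ∀ a : L, a * a⁻¹ = 1) (hinvl : ∀ a : L, a⁻¹ * a = 1)
    (bol : ∀ x y z : L, ((x * y) * z) * y = x * ((y * z) * y))
    (hDF : ∀ x y z : L,
      ((x * y) * z = x * (y * z) ∧ (x * z) * y = x * (z * y)) ∨
      ((x * y) * z = (x * z) * y ∧ x * (y * z) = x * (z * y))) :
    ∀ x y z : L, (x * y) * z = x * (y * z) := by
  have hL : IsRightBolLoop L := ⟨h1, hld, hrd, hinvr, hinvl, bol⟩
  intro x y z
  by_cases hyz : Commute y z
  · by_cases hyq : Commute y (x * (y * z))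
    · have hxy := hL.commute_of_commute_inv hDF (hL.commute_inv_of_commute hDF hyz hyq)
      rw [hL.mul_mul_eq_of_commute hDF hyz hyq, hxy.eq]
    · exact hL.mul_assoc_of_not_commute_mul_mul hDF hyq
  · exact hL.mul_assoc_of_not_commute (hDF x y z) hyz

/-- If each triple of a right Bol loop satisfies D' or F', then the loop is a group. -/
theorem stmt_9 {L : Type*} [Mul L] [One L] [Inv L]
    (h1 : ∀ a : L, 1 * a = a) (h2 : ∀ a : L, a * 1 = a)
    (hld : ∀ a b : L, ∃! x : L, a * x = b) (hrd : ∀ a b : L, ∃! y : L, y * a = b)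
    (hinvr : ∀ a : L, a * a⁻¹ = 1) (hinvl : ∀ a : L, a⁻¹ * a = 1)
    (bol : ∀ x y z : L, ((x * y) * z) * y = x * ((y * z) * y))
    (hDF : ∀ x y z : L,
      ((x * y) * z = x * (y * z) ∧ (x * z) * y = x * (z * y)) ∨
      ((x * y) * z = (x * z) * y ∧ x * (y * z) = x * (z * y))) :
    ∀ x y z : L, (x * y) * z = x * (y * z) :=
  stmt_9_general h1 hld hrd hinvr hinvl bol hDF
end

section
/- Let L be a right Bol loop such that for all x, y, z ∈ L, either E'(x,y,z) or F'(x,y,z) holds, where E'(x,y,z) means (xy)z = x(zy) and (xz)y = x(yz), and F'(x,y,z) means (xy)z = (xz)y and x(yz) = x(zy). Then L is an abelian group: multiplication is commutative and associative. -/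
/-!
The first identities of `E'(1, y, z)` and of `F'(1, y, z)` both reduce to `yz = zy`.
Under commutativity `E'(x, y, z)` is associativity at `(x, y, z)`, while `F'(x, y, z)` reads
`(xy)z = y(xz)`; in that case the cyclic shift `(y, z, x)` gives, by either alternative,
`x(yz) = (xy)z`.
-/

section EOrF

variable {L : Type*} [Mul L]

theorem mul_comm_of_one_mul_of_forall_or [One L] (one_mul : ∀ a : L, 1 * a = a)
    (h : ∀ x y z : L, (x * y) * z = x * (z * y) ∨ (x * y) * z = (x * z) * y) (y z : L) :
    y * z = z * y := by
  rcases h 1 y z with e | f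
  · simpa only [one_mul] using e
  · simpa only [one_mul] using f

theorem mul_assoc_of_mul_comm_of_forall_or (comm : ∀ x y : L, x * y = y * x)
    (h : ∀ x y z : L, (x * y) * z = x * (z * y) ∨ (x * y) * z = (x * z) * y) (x y z : L) :
    (x * y) * z = x * (y * z) := by
  rcases h x y z with e | f
  · rw [e, comm z y]
  · rcases h y z x with e' | f'
    · calc (x * y) * z = (x * z) * y := f
        _ = y * (x * z) := comm _ _
        _ = (y * z) * x := e'.symm
        _ = x * (y * z) := comm _ _
    · calc (x * y) * z = (y * x) * z := by rw [comm x y]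
        _ = (y * z) * x := f'.symm
        _ = x * (y * z) := comm _ _

end EOrF

theorem stmt_10_general {L : Type*} [Mul L] [One L]
    (h1 : ∀ a : L, 1 * a = a)
    (hEF : ∀ x y z : L,
      ((x * y) * z = x * (z * y) ∧ (x * z) * y = x * (y * z)) ∨
      ((x * y) * z = (x * z) * y ∧ x * (y * z) = x * (z * y))) :
    (∀ x y : L, x * y = y * x) ∧ (∀ x y z : L, (x * y) * z = x * (y * z)) := by
  have h : ∀ x y z : L, (x * y) * z = x * (z * y) ∨ (x * y) * z = (x * z) * y :=
    fun x y z => (hEF x y z).imp And.left And.left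
  have comm := mul_comm_of_one_mul_of_forall_or h1 h
  exact ⟨comm, mul_assoc_of_mul_comm_of_forall_or comm h⟩

/-- If each triple of a right Bol loop satisfies E' or F', then the loop is an
abelian group. -/
theorem stmt_10 {L : Type*} [Mul L] [One L]
    (h1 : ∀ a : L, 1 * a = a) (h2 : ∀ a : L, a * 1 = a)
    (hld : ∀ a b : L, ∃! x : L, a * x = b) (hrd : ∀ a b : L, ∃! y : L, y * a = b)
    (bol : ∀ x y z : L, ((x * y) * z) * y = x * ((y * z) * y))
    (hEF : ∀ x y z : L,
      ((x * y) * z = x * (z * y) ∧ (x * z) * y = x * (y * z)) ∨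
      ((x * y) * z = (x * z) * y ∧ x * (y * z) = x * (z * y))) :
    (∀ x y : L, x * y = y * x) ∧ (∀ x y z : L, (x * y) * z = x * (y * z)) :=
  stmt_10_general h1 hEF
end

section
/- Let L be a right Bol loop of finite odd order in which, for all x, y, z ∈ L, at least one of D'(x,y,z), E'(x,y,z), F'(x,y,z) holds (D': (xy)z = x(yz) and (xz)y = x(zy); E': (xy)z = x(zy) and (xz)y = x(yz); F': (xy)z = (xz)y and x(yz) = x(zy)). Then whenever F'(x,y,z) holds, also D'(x,y,z) holds; consequently for every triple x, y, z, D'(x,y,z) or E'(x,y,z) holds. -/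
/-!
Fix `x, y` and call `w` good if `y` commutes with `w` and `(x y) w = (x w) y`. The Bol identity
gives `(x y)(w w) = ((x w) y) w = x((w y) w) = x(y (w w))` for good `w`, and then the trichotomy
D'/E'/F' at `(x, y, w w)` and at `(w, y, w)` shows that `w w` is good again. If `F'(x, y, z)`
holds then `z` is good, so every iterated square of `z` is good and associates with `x, y` as
above. Since the right translation by `z` has odd order, `2 ^ k ≡ 1` modulo that order for some
`k ≥ 1`, so `z` is itself such an iterated square, which gives `D'(x, y, z)`.
-/

namespace RightBolLoop

variable {L : Type*} [Mul L]

theorem mul_left_cancel_of_existsUnique (hld : ∀ a b : L, ∃! x : L, a * x = b) {a b c : L}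
    (h : a * b = a * c) : b = c :=
  (hld a (a * c)).unique h rfl

noncomputable def rightMul (hrd : ∀ a b : L, ∃! y : L, y * a = b) (a : L) : Equiv.Perm L :=
  Equiv.ofBijective (· * a)
    ⟨fun _ v h => (hrd a (v * a)).unique h rfl, fun b => (hrd a b).exists⟩

@[simp]
theorem rightMul_apply (hrd : ∀ a b : L, ∃! y : L, y * a = b) (a x : L) :
    rightMul hrd a x = x * a := rfl

/-- The conditions D', E' and F' on a triple `(x, y, z)`. -/
def CondD (x y z : L) : Prop := (x * y) * z = x * (y * z) ∧ (x * z) * y = x * (z * y)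

def CondE (x y z : L) : Prop := (x * y) * z = x * (z * y) ∧ (x * z) * y = x * (y * z)

def CondF (x y z : L) : Prop := (x * y) * z = (x * z) * y ∧ x * (y * z) = x * (z * y)

theorem mul_right_comm_of_assoc (hDEF : ∀ x y z : L, CondD x y z ∨ CondE x y z ∨ CondF x y z)
    {x y w : L} (hc : Commute y w) (hassoc : (x * y) * w = x * (y * w)) :
    (x * y) * w = (x * w) * y := by
  rcases hDEF x y w with ⟨-, hB⟩ | ⟨hA, hB⟩ | ⟨hA, -⟩
  · rw [hassoc, hc.eq, hB]
  · rw [hA, hB, hc.eq]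
  · exact hA

variable [One L]

theorem mul_mul_self_of_bol (h2 : ∀ a : L, a * 1 = a)
    (bol : ∀ x y z : L, ((x * y) * z) * y = x * ((y * z) * y)) (x y : L) :
    (x * y) * y = x * (y * y) := by
  simpa only [h2] using bol x y 1

theorem rightMul_apply_one (h1 : ∀ a : L, 1 * a = a) (hrd : ∀ a b : L, ∃! y : L, y * a = b)
    (a : L) : rightMul hrd a 1 = a :=
  h1 a

theorem rightMul_iterate_mul_self (h2 : ∀ a : L, a * 1 = a)
    (hrd : ∀ a b : L, ∃! y : L, y * a = b)
    (bol : ∀ x y z : L, ((x * y) * z) * y = x * ((y * z) * y)) (a : L) (k : ℕ) :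
    rightMul hrd ((fun w : L => w * w)^[k] a) = rightMul hrd a ^ 2 ^ k := by
  induction k with
  | zero => simp
  | succ k ih =>
    have hsq : ∀ b : L, rightMul hrd (b * b) = rightMul hrd b * rightMul hrd b :=
      fun b => Equiv.ext fun x => (mul_mul_self_of_bol h2 bol x b).symm
    rw [Function.iterate_succ_apply', hsq, ih, pow_succ, pow_mul, sq]

theorem rightMul_pow_apply (h1 : ∀ a : L, 1 * a = a) (h2 : ∀ a : L, a * 1 = a)
    (hrd : ∀ a b : L, ∃! y : L, y * a = b)
    (bol : ∀ x y z : L, ((x * y) * z) * y = x * ((y * z) * y)) (a : L) (n : ℕ) (x : L) :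
    (rightMul hrd a ^ n) x = x * (rightMul hrd a ^ n) 1 := by
  induction n using Nat.twoStepInduction generalizing x with
  | zero => exact (h2 x).symm
  | one => simp [h1]
  | more n ih _ =>
    have hstep : ∀ u : L,
        (rightMul hrd a ^ (n + 2)) u = u * ((a * (rightMul hrd a ^ n) 1) * a) := by
      intro u
      rw [pow_succ, pow_succ', mul_assoc]
      simp only [Equiv.Perm.mul_apply, rightMul_apply]
      rw [ih]
      exact bol u a _
    rw [hstep x, hstep 1, h1]

theorem rightMul_pow_eq_one_of_apply_eq (h1 : ∀ a : L, 1 * a = a) (h2 : ∀ a : L, a * 1 = a)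
    (hld : ∀ a b : L, ∃! x : L, a * x = b) (hrd : ∀ a b : L, ∃! y : L, y * a = b)
    (bol : ∀ x y z : L, ((x * y) * z) * y = x * ((y * z) * y)) {a x : L} {n : ℕ}
    (hx : (rightMul hrd a ^ n) x = x) : rightMul hrd a ^ n = 1 := by
  have hone : (rightMul hrd a ^ n) 1 = 1 := by
    refine mul_left_cancel_of_existsUnique hld (a := x) ?_
    rw [← rightMul_pow_apply h1 h2 hrd bol, hx, h2]
  ext y
  rw [rightMul_pow_apply h1 h2 hrd bol, hone, h2, Equiv.Perm.one_apply]

theorem odd_orderOf_rightMul [Fintype L] (h1 : ∀ a : L, 1 * a = a) (h2 : ∀ a : L, a * 1 = a)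
    (hld : ∀ a b : L, ∃! x : L, a * x = b) (hrd : ∀ a b : L, ∃! y : L, y * a = b)
    (bol : ∀ x y z : L, ((x * y) * z) * y = x * ((y * z) * y))
    (hodd : Odd (Fintype.card L)) (a : L) : Odd (orderOf (rightMul hrd a)) := by
  rcases Nat.even_or_odd (orderOf (rightMul hrd a)) with ⟨t, ht⟩ | hord
  · -- on a set of odd size the involution `rightMul a ^ t` has a fixed point, hence is trivial
    have hpos : 0 < orderOf (rightMul hrd a) := orderOf_pos _
    have hinv : (rightMul hrd a ^ t) ^ 2 ^ 1 = 1 := by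
      rw [← pow_mul, pow_one, mul_two, ← ht, pow_orderOf_eq_one]
    obtain ⟨x, hx⟩ := Equiv.Perm.exists_fixed_point_of_prime hodd.not_two_dvd_nat hinv
    have := orderOf_le_of_pow_eq_one (by omega)
      (rightMul_pow_eq_one_of_apply_eq h1 h2 hld hrd bol hx)
    omega
  · exact hord

theorem exists_iterate_mul_self_eq [Fintype L] (h1 : ∀ a : L, 1 * a = a)
    (h2 : ∀ a : L, a * 1 = a) (hld : ∀ a b : L, ∃! x : L, a * x = b)
    (hrd : ∀ a b : L, ∃! y : L, y * a = b)
    (bol : ∀ x y z : L, ((x * y) * z) * y = x * ((y * z) * y))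
    (hodd : Odd (Fintype.card L)) (a : L) : ∃ k, (fun w : L => w * w)^[k + 1] a = a := by
  set σ := rightMul hrd a
  have hcop : Nat.Coprime 2 (orderOf σ) :=
    Nat.coprime_two_left.mpr (odd_orderOf_rightMul h1 h2 hld hrd bol hodd a)
  obtain ⟨k, hk⟩ := Nat.exists_eq_add_one_of_ne_zero (Nat.totient_pos.mpr (orderOf_pos σ)).ne'
  have hσ : σ ^ 2 ^ (k + 1) = σ ^ 1 := by
    rw [pow_eq_pow_iff_modEq, ← hk]
    exact Nat.ModEq.pow_totient hcop
  refine ⟨k, ?_⟩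
  rw [← rightMul_apply_one h1 hrd (_^[k + 1] a), rightMul_iterate_mul_self h2 hrd bol, hσ,
    pow_one, rightMul_apply_one h1 hrd]

theorem mul_mul_self_assoc_of_commute (h2 : ∀ a : L, a * 1 = a)
    (bol : ∀ x y z : L, ((x * y) * z) * y = x * ((y * z) * y)) {x y w : L} (hc : Commute y w)
    (hF : (x * y) * w = (x * w) * y) : (x * y) * (w * w) = x * (y * (w * w)) :=
  calc (x * y) * (w * w) = ((x * y) * w) * w := (mul_mul_self_of_bol h2 bol _ w).symm
    _ = ((x * w) * y) * w := by rw [hF]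
    _ = x * ((w * y) * w) := bol x w y
    _ = x * ((y * w) * w) := by rw [hc.eq]
    _ = x * (y * (w * w)) := by rw [mul_mul_self_of_bol h2 bol y w]

theorem commute_mul_self (h2 : ∀ a : L, a * 1 = a)
    (bol : ∀ x y z : L, ((x * y) * z) * y = x * ((y * z) * y))
    (hDEF : ∀ x y z : L, CondD x y z ∨ CondE x y z ∨ CondF x y z) {y w : L} (hc : Commute y w) :
    Commute y (w * w) := by
  have hsq : (w * y) * w = (w * w) * y := by
    rcases hDEF w y w with ⟨hA, hB⟩ | ⟨hA, hB⟩ | ⟨hA, -⟩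
    · rw [hA, hc.eq, hB]
    · rw [hA, hB, hc.eq]
    · exact hA
  calc y * (w * w) = (y * w) * w := (mul_mul_self_of_bol h2 bol y w).symm
    _ = (w * y) * w := by rw [hc.eq]
    _ = (w * w) * y := hsq

theorem iterate_mul_self_of_commute_of_mul_right_comm (h2 : ∀ a : L, a * 1 = a)
    (bol : ∀ x y z : L, ((x * y) * z) * y = x * ((y * z) * y))
    (hDEF : ∀ x y z : L, CondD x y z ∨ CondE x y z ∨ CondF x y z) {x y z : L}
    (hc : Commute y z) (hF : (x * y) * z = (x * z) * y) (k : ℕ) :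
    Commute y ((fun w : L => w * w)^[k] z) ∧
      (x * y) * (fun w : L => w * w)^[k] z = (x * (fun w : L => w * w)^[k] z) * y := by
  induction k with
  | zero => exact ⟨hc, hF⟩
  | succ k ih =>
    rw [Function.iterate_succ_apply']
    have hc' := commute_mul_self h2 bol hDEF ih.1
    exact ⟨hc', mul_right_comm_of_assoc hDEF hc' (mul_mul_self_assoc_of_commute h2 bol ih.1 ih.2)⟩

theorem condD_of_condF [Fintype L] (h1 : ∀ a : L, 1 * a = a) (h2 : ∀ a : L, a * 1 = a)
    (hld : ∀ a b : L, ∃! x : L, a * x = b) (hrd : ∀ a b : L, ∃! y : L, y * a = b)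
    (bol : ∀ x y z : L, ((x * y) * z) * y = x * ((y * z) * y))
    (hodd : Odd (Fintype.card L))
    (hDEF : ∀ x y z : L, CondD x y z ∨ CondE x y z ∨ CondF x y z) {x y z : L}
    (hF : CondF x y z) : CondD x y z := by
  have hc : Commute y z := mul_left_cancel_of_existsUnique hld hF.2
  obtain ⟨k, hk⟩ := exists_iterate_mul_self_eq h1 h2 hld hrd bol hodd z
  obtain ⟨hck, hFk⟩ := iterate_mul_self_of_commute_of_mul_right_comm h2 bol hDEF hc hF.1 k
  have hassoc : (x * y) * z = x * (y * z) := by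
    have := mul_mul_self_assoc_of_commute h2 bol hck hFk
    rwa [← Function.iterate_succ_apply' (fun w : L => w * w), hk] at this
  exact ⟨hassoc, by rw [← hF.1, hassoc, hF.2]⟩

end RightBolLoop

open RightBolLoop in
/-- In a right Bol loop of odd order in which each triple satisfies D', E' or F',
whenever F' holds so does D'; consequently each triple satisfies D' or E'. -/
theorem stmt_11 {L : Type*} [Mul L] [One L] [Fintype L]
    (h1 : ∀ a : L, 1 * a = a) (h2 : ∀ a : L, a * 1 = a)
    (hld : ∀ a b : L, ∃! x : L, a * x = b) (hrd : ∀ a b : L, ∃! y : L, y * a = b)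
    (bol : ∀ x y z : L, ((x * y) * z) * y = x * ((y * z) * y))
    (hodd : Odd (Fintype.card L))
    (hDEF : ∀ x y z : L,
      ((x * y) * z = x * (y * z) ∧ (x * z) * y = x * (z * y)) ∨
      ((x * y) * z = x * (z * y) ∧ (x * z) * y = x * (y * z)) ∨
      ((x * y) * z = (x * z) * y ∧ x * (y * z) = x * (z * y))) :
    (∀ x y z : L, ((x * y) * z = (x * z) * y ∧ x * (y * z) = x * (z * y)) →
      ((x * y) * z = x * (y * z) ∧ (x * z) * y = x * (z * y))) ∧
    (∀ x y z : L,
      ((x * y) * z = x * (y * z) ∧ (x * z) * y = x * (z * y)) ∨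
      ((x * y) * z = x * (z * y) ∧ (x * z) * y = x * (y * z))) := by
  have hFD : ∀ x y z : L, CondF x y z → CondD x y z := fun _ _ _ hF =>
    condD_of_condF h1 h2 hld hrd bol hodd hDEF hF
  refine ⟨hFD, fun x y z => ?_⟩
  rcases hDEF x y z with hD | hE | hF
  exacts [Or.inl hD, Or.inr hE, Or.inl (hFD x y z hF)]
end

section
/- In a right Bol loop L, if elements x, y, z satisfy (xy)z = (xz)y and yz = zy, then (xz)y² = x(zy²), i.e., x, z, and y² associate in that order. -/
theorem mul_mul_self_eq_mul_mul_of_rightBol {L : Type*} [Mul L] [One L]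
    (mul_one_eq : ∀ a : L, a * 1 = a)
    (bol : ∀ x y z : L, ((x * y) * z) * y = x * ((y * z) * y)) (a y : L) :
    a * (y * y) = (a * y) * y := by
  simpa only [mul_one_eq] using (bol a y 1).symm

theorem stmt_12_general {L : Type*} [Mul L] [One L]
    (h2 : ∀ a : L, a * 1 = a)
    (bol : ∀ x y z : L, ((x * y) * z) * y = x * ((y * z) * y))
    (x y z : L)
    (hxyz : (x * y) * z = (x * z) * y) (hyz : y * z = z * y) :
    (x * z) * (y * y) = x * (z * (y * y)) := by
  have sq := mul_mul_self_eq_mul_mul_of_rightBol h2 bol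
  calc (x * z) * (y * y) = ((x * y) * z) * y := by rw [sq, hxyz]
    _ = x * ((z * y) * y) := by rw [bol, hyz]
    _ = x * (z * (y * y)) := by rw [sq]

/-- In a right Bol loop, if (xy)z = (xz)y and yz = zy, then x, z and y² associate
in that order. -/
theorem stmt_12 {L : Type*} [Mul L] [One L]
    (h1 : ∀ a : L, 1 * a = a) (h2 : ∀ a : L, a * 1 = a)
    (hld : ∀ a b : L, ∃! x : L, a * x = b) (hrd : ∀ a b : L, ∃! y : L, y * a = b)
    (bol : ∀ x y z : L, ((x * y) * z) * y = x * ((y * z) * y))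
    (x y z : L)
    (hxyz : (x * y) * z = (x * z) * y) (hyz : y * z = z * y) :
    (x * z) * (y * y) = x * (z * (y * y)) :=
  stmt_12_general h2 bol x y z hxyz hyz
end

section
/- Let L be a Moufang loop and suppose x, y, z ∈ L satisfy both y(zx) = x(yz) and (y(yz))x = y(x(yz)). Then (y²z)x = y²(zx). -/
/-!
Only the left alternative law `y * (y * w) = (y * y) * w` is needed: with it, both sides of the
goal unfold to `y * (y * (z * x))`, using the second hypothesis and then the first.

The left alternative law is the case `b = 1` of the left Moufang identity
`a * (b * (a * c)) = ((a * b) * a) * c`, which is the mirror image of the given right one under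
the inversion map. A left inverse `ι` exists by right divisibility; the given identity makes
`ι` two-sided, involutive and an anti-automorphism, so it does turn one identity into the other.
-/

section MoufangLoop

variable {L : Type*} [Mul L] [One L]

theorem mul_mul_cancel_left_of_mul_eq_one (hone_mul : ∀ a : L, 1 * a = a)
    (hdiv : ∀ a b : L, ∃ y, y * a = b)
    (hmoufang : ∀ x y z : L, ((x * y) * z) * y = x * (y * (z * y)))
    {u v : L} (huv : u * v = 1) (w : L) : u * (v * w) = w := by
  obtain ⟨c, hc⟩ := hdiv v w
  simpa only [huv, hone_mul, hc] using (hmoufang u v c).symm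

theorem mul_mul_cancel_right_of_mul_eq_one (hmul_one : ∀ a : L, a * 1 = a)
    (hdiv : ∀ a b : L, ∃ y, y * a = b)
    (hmoufang : ∀ x y z : L, ((x * y) * z) * y = x * (y * (z * y)))
    {u v : L} (huv : u * v = 1) (b : L) : (b * u) * v = b := by
  obtain ⟨a, ha⟩ := hdiv v b
  simpa only [huv, hmul_one, ha] using hmoufang a v u

section LeftInverse

variable (hone_mul : ∀ a : L, 1 * a = a) (hmul_one : ∀ a : L, a * 1 = a)
  (hdiv : ∀ a b : L, ∃ y, y * a = b)
  (hmoufang : ∀ x y z : L, ((x * y) * z) * y = x * (y * (z * y)))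
  {ι : L → L} (hι : ∀ a, ι a * a = 1)

include hone_mul hmul_one hdiv hmoufang hι

theorem inv_inv_of_inv_mul_eq_one (a : L) : ι (ι a) = a := by
  have h := mul_mul_cancel_right_of_mul_eq_one hmul_one hdiv hmoufang (hι a) (ι (ι a))
  rwa [hι, hone_mul, eq_comm] at h

theorem mul_inv_eq_one_of_inv_mul_eq_one (a : L) : a * ι a = 1 := by
  simpa only [inv_inv_of_inv_mul_eq_one hone_mul hmul_one hdiv hmoufang hι] using hι (ι a)

theorem inv_mul_rev_of_inv_mul_eq_one (a b : L) : ι (a * b) = ι b * ι a := by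
  have hb : ι a * (a * b) = b :=
    mul_mul_cancel_left_of_mul_eq_one hone_mul hdiv hmoufang (hι a) b
  have h : b * ι (a * b) = ι a := by
    simpa only [hb] using mul_mul_cancel_right_of_mul_eq_one hmul_one hdiv hmoufang
      (mul_inv_eq_one_of_inv_mul_eq_one hone_mul hmul_one hdiv hmoufang hι (a * b)) (ι a)
  rw [← h, mul_mul_cancel_left_of_mul_eq_one hone_mul hdiv hmoufang (hι b)]

end LeftInverse

theorem left_moufang_of_right_moufang (hone_mul : ∀ a : L, 1 * a = a)
    (hmul_one : ∀ a : L, a * 1 = a) (hdiv : ∀ a b : L, ∃ y, y * a = b)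
    (hmoufang : ∀ x y z : L, ((x * y) * z) * y = x * (y * (z * y))) (a b c : L) :
    a * (b * (a * c)) = ((a * b) * a) * c := by
  choose ι hι using fun a : L => hdiv a 1
  have h := congrArg ι (hmoufang (ι c) (ι a) (ι b))
  simpa only [inv_mul_rev_of_inv_mul_eq_one hone_mul hmul_one hdiv hmoufang hι,
    inv_inv_of_inv_mul_eq_one hone_mul hmul_one hdiv hmoufang hι] using h

theorem mul_mul_self_eq_mul_self_mul (hone_mul : ∀ a : L, 1 * a = a)
    (hmul_one : ∀ a : L, a * 1 = a) (hdiv : ∀ a b : L, ∃ y, y * a = b)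
    (hmoufang : ∀ x y z : L, ((x * y) * z) * y = x * (y * (z * y))) (a c : L) :
    a * (a * c) = (a * a) * c := by
  simpa only [hone_mul, hmul_one] using
    left_moufang_of_right_moufang hone_mul hmul_one hdiv hmoufang a 1 c

end MoufangLoop

/-- In a Moufang loop, if y(zx) = x(yz) and (y(yz))x = y(x(yz)), then
(y²z)x = y²(zx). -/
theorem stmt_14 {L : Type*} [Mul L] [One L]
    (h1 : ∀ a : L, 1 * a = a) (h2 : ∀ a : L, a * 1 = a)
    (hrd : ∀ a b : L, ∃! y : L, y * a = b)
    (mfg : ∀ x y z : L, ((x * y) * z) * y = x * (y * (z * y)))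
    (x y z : L)
    (h1 : y * (z * x) = x * (y * z))
    (h2 : (y * (y * z)) * x = y * (x * (y * z))) :
    ((y * y) * z) * x = (y * y) * (z * x) := by
  rename_i hone_mul hmul_one
  have left_alt := mul_mul_self_eq_mul_self_mul hone_mul hmul_one (fun a b => (hrd a b).exists) mfg
  calc ((y * y) * z) * x = (y * (y * z)) * x := by rw [left_alt]
    _ = y * (x * (y * z)) := h2
    _ = y * (y * (z * x)) := by rw [← h1]
    _ = (y * y) * (z * x) := left_alt y (z * x)
end
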